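/- arXiv:0911.5210 — 3 statements merged into one kernel-verified Lean document; each statement's English description precedes it below -/
import Mathlib

section
/- The operators q_i and p_j defined on the vector space W(a) with basis {x(b) : b ∈ P_a} by q_i·x(b) = (b_i+1)x(b+ε_i) if b_i is a negative integer and x(b+ε_i) otherwise, and p_j·x(b) = x(b−ε_j) if b_j is a negative integer and b_j x(b−ε_j) otherwise, satisfy the Weyl algebra relations: [q_i,q_j] = 0, [p_i,p_j] = 0, and [p_j,q_i] = δ_{ij}·id for all i,j ∈ {1,…,m}. -/
open Finsupp

attribute [local instance] Classical.propDecidable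

noncomputable section

/-- The ambient vector space with basis indexed by `ℂ^m`. -/
abbrev Wsp (m : ℕ) : Type := (Fin m → ℂ) →₀ ℂ

/-- the `i`-th standard basis vector of `ℂ^m`. -/
def eps (m : ℕ) (i : Fin m) : Fin m → ℂ := fun j => if j = i then 1 else 0

/-- `z` is a negative integer. -/
def NegInt (z : ℂ) : Prop := ∃ k : ℤ, k < 0 ∧ z = (k : ℂ)

/-- the basis vector `x(b)`. -/
def xv (m : ℕ) (b : Fin m → ℂ) : Wsp m := Finsupp.single b 1

/-- the multiplication operator `q_i`. -/
def qOp (m : ℕ) (i : Fin m) : Wsp m →ₗ[ℂ] Wsp m :=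
  Finsupp.lsum ℂ fun b => (if NegInt (b i) then b i + 1 else 1) • Finsupp.lsingle (b + eps m i)

/-- the derivation operator `p_j`. -/
def pOp (m : ℕ) (j : Fin m) : Wsp m →ₗ[ℂ] Wsp m :=
  Finsupp.lsum ℂ fun b => (if NegInt (b j) then 1 else b j) • Finsupp.lsingle (b - eps m j)

/-- the operator corresponding to the elementary matrix `E_{i,j}`. -/
def Eop (m : ℕ) (i j : Fin m) : Wsp m →ₗ[ℂ] Wsp m := qOp m i ∘ₗ pOp m j

/-- commutator of operators. -/
def oComm {m : ℕ} (f g : Wsp m →ₗ[ℂ] Wsp m) : Wsp m →ₗ[ℂ] Wsp m := f ∘ₗ g - g ∘ₗ f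

/-- `z` is a negative (real) number. -/
def Cneg (z : ℂ) : Prop := z.im = 0 ∧ z.re < 0

/-- the index set `P_a`. -/
def Pa (m : ℕ) (a : Fin m → ℂ) : Set (Fin m → ℂ) :=
  {b | ∀ i, (∃ k : ℤ, b i - a i = (k : ℂ)) ∧ (Cneg (b i) ↔ Cneg (a i))}

end


noncomputable section WeylHelpers

lemma qOp_xv (m : ℕ) (i : Fin m) (b : Fin m → ℂ) :
    qOp m i (xv m b) = (if NegInt (b i) then b i + 1 else 1) • xv m (b + eps m i) := by
  simp [qOp, xv, Finsupp.lsum_single]; split <;> simp [Finsupp.smul_single, Finsupp.single_add]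

lemma pOp_xv (m : ℕ) (j : Fin m) (b : Fin m → ℂ) :
    pOp m j (xv m b) = (if NegInt (b j) then 1 else b j) • xv m (b - eps m j) := by
  simp [pOp, xv, Finsupp.lsum_single]; split <;> simp [Finsupp.smul_single]

lemma negInt_zero : ¬ NegInt 0 := by
  rintro ⟨k, hk, h⟩
  have : (k : ℂ) = 0 := h.symm
  exact_mod_cast absurd (by exact_mod_cast this : k = 0) (by omega)

lemma weyl_key (z : ℂ) :
    (if NegInt z then z + 1 else 1) * (if NegInt (z + 1) then 1 else z + 1)
      - (if NegInt z then 1 else z) * (if NegInt (z - 1) then z - 1 + 1 else 1) = 1 := by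
  by_cases hz : NegInt z
  · obtain ⟨k, hk, rfl⟩ := hz
    have hzneg : NegInt ((k : ℂ)) := ⟨k, hk, rfl⟩
    have hzm : NegInt ((k : ℂ) - 1) := ⟨k - 1, by omega, by push_cast; ring⟩
    rw [if_pos hzneg, if_pos hzneg, if_pos hzm]
    by_cases hk1 : k + 1 < 0
    · have h1 : NegInt ((k : ℂ) + 1) := ⟨k + 1, hk1, by push_cast; ring⟩
      rw [if_pos h1]; ring
    · have hk' : k = -1 := by omega
      subst hk'
      have h1 : ¬ NegInt ((-1 : ℤ) + 1 : ℂ) := by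
        have h0 : (((-1 : ℤ) : ℂ)) + 1 = 0 := by push_cast; ring
        rw [h0]; exact negInt_zero
      rw [if_neg h1]
      push_cast; ring
  · have hz1 : ¬ NegInt (z + 1) := by
      rintro ⟨k, hk, h⟩
      exact hz ⟨k - 1, by omega, by push_cast; linear_combination h⟩
    rw [if_neg hz, if_neg hz, if_neg hz1]
    by_cases hzm : NegInt (z - 1)
    · obtain ⟨k, hk, h⟩ := hzm
      have hzk : z = (k : ℂ) + 1 := by linear_combination h
      have hk0 : k = -1 := by
        by_contra hne
        exact hz ⟨k + 1, by omega, by rw [hzk]; push_cast; ring⟩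
      have hz0 : z = 0 := by rw [hzk, hk0]; push_cast; ring
      rw [if_pos (show NegInt (z-1) from ⟨k, hk, h⟩), hz0]; ring
    · rw [if_neg hzm]; ring

end WeylHelpers

/-- the operators `q_i`, `p_j` on `W(a)` satisfy the Weyl algebra relations. -/
theorem weyl_relations (m : ℕ) (hm : 2 ≤ m) (a : Fin m → ℂ)
    (i j : Fin m) (b : Fin m → ℂ) (hb : b ∈ Pa m a) :
    oComm (qOp m i) (qOp m j) (xv m b) = 0 ∧
    oComm (pOp m i) (pOp m j) (xv m b) = 0 ∧
    oComm (pOp m j) (qOp m i) (xv m b) = (if i = j then (1 : ℂ) else 0) • xv m b := by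
  refine ⟨?_, ?_, ?_⟩
  · by_cases hij : i = j
    · subst hij; simp [oComm]
    · have h1 : (b + eps m j) i = b i := by simp [eps, hij]
      have h2 : (b + eps m i) j = b j := by simp [eps, Ne.symm hij]
      have e1 : b + eps m j + eps m i = b + eps m i + eps m j := by abel
      simp only [oComm, LinearMap.sub_apply, LinearMap.comp_apply, qOp_xv, map_smul,
        h1, h2, smul_smul, e1]
      rw [mul_comm]; exact sub_self _
  · by_cases hij : i = j
    · subst hij; simp [oComm]
    · have h1 : (b - eps m j) i = b i := by simp [eps, hij]
      have h2 : (b - eps m i) j = b j := by simp [eps, Ne.symm hij]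
      have e1 : b - eps m j - eps m i = b - eps m i - eps m j := by abel
      simp only [oComm, LinearMap.sub_apply, LinearMap.comp_apply, pOp_xv, map_smul,
        h1, h2, smul_smul, e1]
      rw [mul_comm]; exact sub_self _
  · by_cases hij : i = j
    · subst hij
      have h1 : (b + eps m i) i = b i + 1 := by simp [eps]
      have h2 : (b - eps m i) i = b i - 1 := by simp [eps]
      have e1 : b + eps m i - eps m i = b := by abel
      have e2 : b - eps m i + eps m i = b := by abel
      simp only [oComm, LinearMap.sub_apply, LinearMap.comp_apply, qOp_xv, pOp_xv,
        map_smul, h1, h2, e1, e2, smul_smul, if_pos rfl]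
      rw [← sub_smul, weyl_key (b i), one_smul]; simp
    · have h1 : (b + eps m i) j = b j := by simp [eps, Ne.symm hij]
      have h2 : (b - eps m j) i = b i := by simp [eps, hij]
      have e1 : b + eps m i - eps m j = b - eps m j + eps m i := by abel
      simp only [oComm, LinearMap.sub_apply, LinearMap.comp_apply, qOp_xv, pOp_xv, map_smul,
        h1, h2, smul_smul, e1]
      rw [mul_comm, if_neg hij, zero_smul]; exact sub_self _
end

section
/- In sl_{2n}(ℂ) with n > 1, let 𝔟 = {diag(A, A) : A ∈ sl_n(ℂ)} (block diagonal with two equal n×n blocks) and let 𝔞 be the span of X = Σ_{i=1}^n E_{n+i,i}, Y = Σ_{i=1}^n E_{i,n+i}, and H = Σ_{i=1}^n (E_{i,i} − E_{n+i,n+i}). Then (𝔞, 𝔟) is a dual pair: 𝔞 ≅ sl_2, 𝔟 ≅ sl_n, and the centralizer of 𝔟 in sl_{2n} equals 𝔞 and the centralizer of 𝔞 in sl_{2n} equals 𝔟. -/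
noncomputable section

/-- the elementary matrix `E_{i,j}`. -/
def Emat (N : ℕ) (i j : Fin N) : Matrix (Fin N) (Fin N) ℂ := Matrix.single i j 1

/-- `X = Σ_{i=1}^n E_{n+i,i}` in `sl_{2n}`. -/
def Xmat (n : ℕ) : Matrix (Fin (n + n)) (Fin (n + n)) ℂ :=
  ∑ i : Fin n, Emat (n + n) (Fin.natAdd n i) (Fin.castAdd n i)

/-- `Y = Σ_{i=1}^n E_{i,n+i}` in `sl_{2n}`. -/
def Ymat (n : ℕ) : Matrix (Fin (n + n)) (Fin (n + n)) ℂ :=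
  ∑ i : Fin n, Emat (n + n) (Fin.castAdd n i) (Fin.natAdd n i)

/-- `H = Σ_{i=1}^n (E_{i,i} − E_{n+i,n+i})` in `sl_{2n}`. -/
def Hmat (n : ℕ) : Matrix (Fin (n + n)) (Fin (n + n)) ℂ :=
  ∑ i : Fin n,
    (Emat (n + n) (Fin.castAdd n i) (Fin.castAdd n i)
      - Emat (n + n) (Fin.natAdd n i) (Fin.natAdd n i))

/-- the block-diagonal matrix `diag(A,A)` viewed in `gl_{2n}`. -/
def dbl (n : ℕ) (A : Matrix (Fin n) (Fin n) ℂ) : Matrix (Fin (n + n)) (Fin (n + n)) ℂ :=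
  (Matrix.fromBlocks A 0 0 A).submatrix finSumFinEquiv.symm finSumFinEquiv.symm

/-- `𝔟 = {diag(A,A) : A ∈ sl_n}` as a subset of `sl_{2n}`. -/
def bSet (n : ℕ) : Set (Matrix (Fin (n + n)) (Fin (n + n)) ℂ) :=
  {M | ∃ A : Matrix (Fin n) (Fin n) ℂ, Matrix.trace A = 0 ∧ M = dbl n A}

/-- `𝔞 = span(X, Y, H)` as a subset of `sl_{2n}`. -/
def aSet (n : ℕ) : Set (Matrix (Fin (n + n)) (Fin (n + n)) ℂ) :=
  {M | ∃ x y h : ℂ, M = x • Xmat n + y • Ymat n + h • Hmat n}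

end

noncomputable section Aux

open Matrix

variable {n : ℕ}

/-- reindexing a `Sum`-indexed matrix to a `Fin (n+n)`-indexed one. -/
def subE (n : ℕ) (M : Matrix (Fin n ⊕ Fin n) (Fin n ⊕ Fin n) ℂ) :
    Matrix (Fin (n + n)) (Fin (n + n)) ℂ :=
  M.submatrix finSumFinEquiv.symm finSumFinEquiv.symm

lemma subE_inj : Function.Injective (subE n) := by
  intro M N h
  have h2 := congrArg (fun Z => Z.submatrix ⇑finSumFinEquiv ⇑finSumFinEquiv) h
  simpa [subE, submatrix_submatrix, Equiv.symm_comp_self] using h2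

lemma subE_mul (M N : Matrix (Fin n ⊕ Fin n) (Fin n ⊕ Fin n) ℂ) :
    subE n M * subE n N = subE n (M * N) :=
  submatrix_mul_equiv M N _ finSumFinEquiv.symm _

lemma subE_add (M N : Matrix (Fin n ⊕ Fin n) (Fin n ⊕ Fin n) ℂ) :
    subE n M + subE n N = subE n (M + N) := rfl

lemma subE_sub (M N : Matrix (Fin n ⊕ Fin n) (Fin n ⊕ Fin n) ℂ) :
    subE n M - subE n N = subE n (M - N) := rfl

lemma subE_smul (c : ℂ) (M : Matrix (Fin n ⊕ Fin n) (Fin n ⊕ Fin n) ℂ) :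
    c • subE n M = subE n (c • M) := rfl

lemma subE_trace (M : Matrix (Fin n ⊕ Fin n) (Fin n ⊕ Fin n) ℂ) :
    Matrix.trace (subE n M) = Matrix.trace M := by
  simp only [subE, Matrix.trace, Matrix.diag, submatrix_apply]
  exact Equiv.sum_comp finSumFinEquiv.symm fun p => M p p

/-- block versions of the generators -/
def X0 (n : ℕ) : Matrix (Fin n ⊕ Fin n) (Fin n ⊕ Fin n) ℂ := fromBlocks 0 0 1 0
def Y0 (n : ℕ) : Matrix (Fin n ⊕ Fin n) (Fin n ⊕ Fin n) ℂ := fromBlocks 0 1 0 0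
def H0 (n : ℕ) : Matrix (Fin n ⊕ Fin n) (Fin n ⊕ Fin n) ℂ := fromBlocks 1 0 0 (-1)

lemma subE_std (a b : Fin n ⊕ Fin n) (c : ℂ) :
    subE n (single a b c)
      = single (finSumFinEquiv a) (finSumFinEquiv b) c := by
  ext i j
  simp only [subE, submatrix_apply, single, of_apply]
  congr 1
  simp [Equiv.eq_symm_apply, eq_comm]

lemma subE_sum {ι : Type*} (s : Finset ι) (f : ι → Matrix (Fin n ⊕ Fin n) (Fin n ⊕ Fin n) ℂ) :
    subE n (∑ i ∈ s, f i) = ∑ i ∈ s, subE n (f i) := by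
  ext i j; simp [subE, Matrix.sum_apply]

lemma Xmat_eq : Xmat n = subE n (X0 n) := by
  have h1 : X0 n = ∑ i : Fin n, single (Sum.inr i) (Sum.inl i) (1 : ℂ) := by
    ext p q
    rcases p with a | a <;> rcases q with b | b <;>
      simp [X0, fromBlocks, single, Matrix.sum_apply, one_apply, ite_and,
        Finset.sum_ite_eq, eq_comm]
  rw [h1, subE_sum]
  simp only [Xmat, Emat]
  refine Finset.sum_congr rfl fun i _ => ?_
  rw [subE_std]
  simp [finSumFinEquiv_apply_left, finSumFinEquiv_apply_right]

lemma Ymat_eq : Ymat n = subE n (Y0 n) := by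
  have h1 : Y0 n = ∑ i : Fin n, single (Sum.inl i) (Sum.inr i) (1 : ℂ) := by
    ext p q
    rcases p with a | a <;> rcases q with b | b <;>
      simp [Y0, fromBlocks, single, Matrix.sum_apply, one_apply, ite_and,
        Finset.sum_ite_eq, eq_comm]
  rw [h1, subE_sum]
  simp only [Ymat, Emat]
  refine Finset.sum_congr rfl fun i _ => ?_
  rw [subE_std]
  simp [finSumFinEquiv_apply_left, finSumFinEquiv_apply_right]

lemma Hmat_eq : Hmat n = subE n (H0 n) := by
  have h1 : H0 n = ∑ i : Fin n, (single (Sum.inl i) (Sum.inl i) (1 : ℂ)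
      - single (Sum.inr i) (Sum.inr i) (1 : ℂ)) := by
    rw [Finset.sum_sub_distrib]
    ext p q
    rcases p with a | a <;> rcases q with b | b <;>
      simp [H0, fromBlocks, single, Matrix.sum_apply, Matrix.sub_apply, one_apply,
        ite_and, Finset.sum_ite_eq, eq_comm]
  rw [h1, subE_sum]
  simp only [Hmat, Emat]
  refine Finset.sum_congr rfl fun i _ => ?_
  rw [show subE n (single (Sum.inl i) (Sum.inl i) (1:ℂ)
      - single (Sum.inr i) (Sum.inr i) (1:ℂ))
    = subE n (single (Sum.inl i) (Sum.inl i) (1:ℂ))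
      - subE n (single (Sum.inr i) (Sum.inr i) (1:ℂ)) from rfl]
  rw [subE_std, subE_std]
  simp [finSumFinEquiv_apply_left, finSumFinEquiv_apply_right]

lemma dbl_eq (A : Matrix (Fin n) (Fin n) ℂ) : dbl n A = subE n (fromBlocks A 0 0 A) := rfl

lemma fromBlocks_sub' (A B C D A' B' C' D' : Matrix (Fin n) (Fin n) ℂ) :
    Matrix.fromBlocks A B C D - Matrix.fromBlocks A' B' C' D'
      = Matrix.fromBlocks (A - A') (B - B') (C - C') (D - D') := by
  rw [sub_eq_add_neg, fromBlocks_neg, fromBlocks_add]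
  simp [sub_eq_add_neg]

lemma trace_fromBlocks' (A B C D : Matrix (Fin n) (Fin n) ℂ) :
    Matrix.trace (Matrix.fromBlocks A B C D) = Matrix.trace A + Matrix.trace D := by
  simp [Matrix.trace, Matrix.diag, Fintype.sum_sum_type]

lemma scalar_of_comm (hn : 1 < n) (M : Matrix (Fin n) (Fin n) ℂ)
    (h : ∀ A : Matrix (Fin n) (Fin n) ℂ, Matrix.trace A = 0 → M * A = A * M) :
    ∃ c : ℂ, M = c • 1 := by
  haveI : Nontrivial (Fin n) := ⟨⟨⟨0, by omega⟩, ⟨1, by omega⟩, by simp [Fin.ext_iff]⟩⟩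
  have key : ∀ i j k : Fin n, i ≠ j → M k i = if i = k then M j j else 0 := by
    intro i j k hij
    have htr : Matrix.trace (single i j (1 : ℂ)) = 0 :=
      Matrix.trace_single_eq_of_ne i j 1 hij
    have h2 := congrFun (congrFun (h _ htr) k) j
    simpa [Matrix.mul_apply, single, ite_and, mul_ite, ite_mul,
      Finset.sum_ite_eq, Finset.sum_ite_eq'] using h2
  have hoff : ∀ k i : Fin n, k ≠ i → M k i = 0 := by
    intro k i hki
    obtain ⟨j, hj⟩ := exists_ne i
    rw [key i j k (Ne.symm hj)]
    exact if_neg (fun h => hki h.symm)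
  have hdiag : ∀ i j : Fin n, M i i = M j j := by
    intro i j
    rcases eq_or_ne i j with rfl | hij
    · rfl
    · rw [key i j i hij]; simp
  refine ⟨M ⟨0, by omega⟩ ⟨0, by omega⟩, ?_⟩
  ext k l
  rcases eq_or_ne k l with rfl | hkl
  · simp [Matrix.smul_apply, Matrix.one_apply, hdiag k ⟨0, by omega⟩]
  · simp [Matrix.smul_apply, Matrix.one_apply, hkl, hoff k l hkl]

lemma X0_comm (A : Matrix (Fin n) (Fin n) ℂ) :
    X0 n * fromBlocks A 0 0 A = fromBlocks A 0 0 A * X0 n := by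
  simp [X0, fromBlocks_multiply]

lemma Y0_comm (A : Matrix (Fin n) (Fin n) ℂ) :
    Y0 n * fromBlocks A 0 0 A = fromBlocks A 0 0 A * Y0 n := by
  simp [Y0, fromBlocks_multiply]

lemma H0_comm (A : Matrix (Fin n) (Fin n) ℂ) :
    H0 n * fromBlocks A 0 0 A = fromBlocks A 0 0 A * H0 n := by
  simp [H0, fromBlocks_multiply]

lemma Xmat_comm (A : Matrix (Fin n) (Fin n) ℂ) :
    Xmat n * dbl n A = dbl n A * Xmat n := by
  rw [Xmat_eq, dbl_eq, subE_mul, subE_mul, X0_comm]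

lemma Ymat_comm (A : Matrix (Fin n) (Fin n) ℂ) :
    Ymat n * dbl n A = dbl n A * Ymat n := by
  rw [Ymat_eq, dbl_eq, subE_mul, subE_mul, Y0_comm]

lemma Hmat_comm (A : Matrix (Fin n) (Fin n) ℂ) :
    Hmat n * dbl n A = dbl n A * Hmat n := by
  rw [Hmat_eq, dbl_eq, subE_mul, subE_mul, H0_comm]

lemma trace_Xmat : Matrix.trace (Xmat n) = 0 := by
  rw [Xmat_eq, subE_trace, X0, trace_fromBlocks']; simp

lemma trace_Ymat : Matrix.trace (Ymat n) = 0 := by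
  rw [Ymat_eq, subE_trace, Y0, trace_fromBlocks']; simp

lemma trace_Hmat : Matrix.trace (Hmat n) = 0 := by
  rw [Hmat_eq, subE_trace, H0, trace_fromBlocks']; simp

lemma eq_subE (Z : Matrix (Fin (n + n)) (Fin (n + n)) ℂ) :
    Z = subE n (Z.submatrix ⇑finSumFinEquiv ⇑finSumFinEquiv) := by
  ext i j
  simp [subE, submatrix_apply]

end Aux

/-- `(𝔞, 𝔟)` is a dual pair in `sl_{2n}`: the centralizer of `𝔟` in `sl_{2n}`
is `𝔞`, the centralizer of `𝔞` in `sl_{2n}` is `𝔟`; moreover `𝔞 ≅ sl_2` (via the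
`sl_2`-triple relations for `(Y,H,X)`) and `𝔟 ≅ sl_n` (via the injective Lie algebra
morphism `A ↦ diag(A,A)` of `sl_n` onto `𝔟`). -/
theorem dual_pair (n : ℕ) (hn : 1 < n) :
    {Z : Matrix (Fin (n + n)) (Fin (n + n)) ℂ |
        Matrix.trace Z = 0 ∧ ∀ S ∈ bSet n, Z * S = S * Z} = aSet n ∧
    {Z : Matrix (Fin (n + n)) (Fin (n + n)) ℂ |
        Matrix.trace Z = 0 ∧ ∀ S ∈ aSet n, Z * S = S * Z} = bSet n ∧
    (Hmat n * Ymat n - Ymat n * Hmat n = (2 : ℂ) • Ymat n ∧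
      Hmat n * Xmat n - Xmat n * Hmat n = (-2 : ℂ) • Xmat n ∧
      Ymat n * Xmat n - Xmat n * Ymat n = Hmat n) ∧
    Function.Injective (dbl n) ∧
    (∀ A B : Matrix (Fin n) (Fin n) ℂ,
      dbl n (A * B - B * A) = dbl n A * dbl n B - dbl n B * dbl n A) ∧
    (∀ A : Matrix (Fin n) (Fin n) ℂ, Matrix.trace A = 0 → Matrix.trace (dbl n A) = 0) := by
  have hn0 : (n : ℂ) ≠ 0 := Nat.cast_ne_zero.mpr (by omega)
  refine ⟨?_, ?_, ⟨?_, ?_, ?_⟩, ?_, ?_, ?_⟩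
  · -- centralizer of bSet = aSet
    ext Z
    simp only [Set.mem_setOf_eq, aSet]
    constructor
    · rintro ⟨htr, hc⟩
      have hZ := eq_subE (n := n) Z
      set M := Z.submatrix ⇑finSumFinEquiv ⇑finSumFinEquiv with hMdef
      obtain ⟨P, Q, R, S, hM⟩ : ∃ P Q R S, M = Matrix.fromBlocks P Q R S :=
        ⟨_, _, _, _, (Matrix.fromBlocks_toBlocks M).symm⟩
      have hblocks : ∀ A : Matrix (Fin n) (Fin n) ℂ, Matrix.trace A = 0 →
          P * A = A * P ∧ Q * A = A * Q ∧ R * A = A * R ∧ S * A = A * S := by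
        intro A hA
        have hcomm : M * Matrix.fromBlocks A 0 0 A = Matrix.fromBlocks A 0 0 A * M := by
          apply subE_inj
          rw [← subE_mul, ← subE_mul, ← hZ]
          exact hc (dbl n A) ⟨A, hA, rfl⟩
        rw [hM, Matrix.fromBlocks_multiply, Matrix.fromBlocks_multiply] at hcomm
        simp only [Matrix.mul_zero, Matrix.zero_mul, add_zero, zero_add,
          Matrix.fromBlocks_inj] at hcomm
        tauto
      obtain ⟨p, hP⟩ := scalar_of_comm hn P fun A hA => (hblocks A hA).1
      obtain ⟨q, hQ⟩ := scalar_of_comm hn Q fun A hA => (hblocks A hA).2.1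
      obtain ⟨r, hR⟩ := scalar_of_comm hn R fun A hA => (hblocks A hA).2.2.1
      obtain ⟨s, hS⟩ := scalar_of_comm hn S fun A hA => (hblocks A hA).2.2.2
      have h3 : Matrix.trace Z = p * (n : ℂ) + s * (n : ℂ) := by
        rw [hZ, subE_trace, hM, trace_fromBlocks', hP, hS]
        simp [Matrix.trace_smul, Matrix.trace_one, smul_eq_mul]
      have hps : s = -p := by
        have h5 : (p + s) * (n : ℂ) = 0 := by rw [← htr, h3]; ring
        rcases mul_eq_zero.mp h5 with h6 | h6
        · linear_combination h6
        · exact absurd h6 hn0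
      refine ⟨r, q, p, ?_⟩
      rw [hZ, hM, hP, hQ, hR, hS, hps, Xmat_eq, Ymat_eq, Hmat_eq, subE_smul, subE_smul,
        subE_smul, subE_add, subE_add]
      congr 1
      simp only [X0, Y0, H0, Matrix.fromBlocks_smul, Matrix.fromBlocks_add,
        Matrix.fromBlocks_inj, smul_zero, add_zero, zero_add, smul_neg, neg_smul]
    · rintro ⟨x, y, h, rfl⟩
      refine ⟨?_, ?_⟩
      · simp [Matrix.trace_add, Matrix.trace_smul, trace_Xmat, trace_Ymat, trace_Hmat]
      · rintro S ⟨A, hA, rfl⟩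
        simp only [add_mul, mul_add, smul_mul_assoc, mul_smul_comm, Xmat_comm, Ymat_comm,
          Hmat_comm]
  · -- centralizer of aSet = bSet
    ext Z
    simp only [Set.mem_setOf_eq, bSet]
    constructor
    · rintro ⟨htr, hc⟩
      have hZ := eq_subE (n := n) Z
      set M := Z.submatrix ⇑finSumFinEquiv ⇑finSumFinEquiv with hMdef
      obtain ⟨P, Q, R, S, hM⟩ : ∃ P Q R S, M = Matrix.fromBlocks P Q R S :=
        ⟨_, _, _, _, (Matrix.fromBlocks_toBlocks M).symm⟩
      have hX : M * X0 n = X0 n * M := by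
        apply subE_inj
        rw [← subE_mul, ← subE_mul, ← hZ, ← Xmat_eq]
        exact hc (Xmat n) ⟨1, 0, 0, by simp⟩
      have hY : M * Y0 n = Y0 n * M := by
        apply subE_inj
        rw [← subE_mul, ← subE_mul, ← hZ, ← Ymat_eq]
        exact hc (Ymat n) ⟨0, 1, 0, by simp⟩
      rw [hM] at hX hY
      simp only [X0, Y0, Matrix.fromBlocks_multiply, Matrix.mul_zero, Matrix.zero_mul,
        Matrix.mul_one, Matrix.one_mul, add_zero, zero_add, Matrix.fromBlocks_inj] at hX hY
      obtain ⟨hQ, -, hSP, -⟩ := hX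
      obtain ⟨hR, -, -, -⟩ := hY
      refine ⟨P, ?_, ?_⟩
      · have h3 : Matrix.trace Z = Matrix.trace P + Matrix.trace S := by
          rw [hZ, subE_trace, hM, trace_fromBlocks']
        rw [htr, hSP] at h3
        linear_combination (-1/2 : ℂ) * h3
      · rw [hZ, hM, hQ, hSP, ← hR]
        rfl
    · rintro ⟨A, hA, rfl⟩
      refine ⟨?_, ?_⟩
      · rw [dbl_eq, subE_trace, trace_fromBlocks', hA, add_zero]
      · rintro S ⟨x, y, h, rfl⟩
        simp only [add_mul, mul_add, smul_mul_assoc, mul_smul_comm, Xmat_comm, Ymat_comm,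
          Hmat_comm]
  · rw [Hmat_eq, Ymat_eq, subE_mul, subE_mul, subE_sub, subE_smul]
    congr 1
    simp only [H0, Y0, Matrix.fromBlocks_multiply, Matrix.fromBlocks_smul, fromBlocks_sub',
      Matrix.mul_zero, Matrix.zero_mul, Matrix.mul_one, Matrix.one_mul, Matrix.mul_neg,
      Matrix.neg_mul, add_zero, zero_add, smul_zero, Matrix.fromBlocks_inj]
    refine ⟨by simp, ?_, by simp, by simp⟩
    rw [sub_neg_eq_add, two_smul]
  · rw [Hmat_eq, Xmat_eq, subE_mul, subE_mul, subE_sub, subE_smul]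
    congr 1
    simp only [H0, X0, Matrix.fromBlocks_multiply, Matrix.fromBlocks_smul, fromBlocks_sub',
      Matrix.mul_zero, Matrix.zero_mul, Matrix.mul_one, Matrix.one_mul, Matrix.mul_neg,
      Matrix.neg_mul, add_zero, zero_add, smul_zero, Matrix.fromBlocks_inj]
    refine ⟨by simp, by simp, ?_, by simp⟩
    rw [neg_smul, two_smul]
    abel
  · rw [Ymat_eq, Xmat_eq, Hmat_eq, subE_mul, subE_mul, subE_sub]
    congr 1
    simp only [Y0, X0, H0, Matrix.fromBlocks_multiply, fromBlocks_sub', Matrix.mul_zero,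
      Matrix.zero_mul, Matrix.mul_one, Matrix.one_mul, add_zero, zero_add,
      Matrix.fromBlocks_inj]
    exact ⟨by simp, by simp, by simp, by simp⟩
  · intro A B hAB
    have h2 := subE_inj hAB
    rw [Matrix.fromBlocks_inj] at h2
    exact h2.1
  · intro A B
    rw [dbl_eq, dbl_eq, dbl_eq, subE_mul, subE_mul, subE_sub]
    congr 1
    simp [Matrix.fromBlocks_multiply, fromBlocks_sub']
  · intro A hA
    rw [dbl_eq, subE_trace, trace_fromBlocks', hA, add_zero]
end

section
/- For the dual pair element actions on N_{a_1,a_2}: for 1 ≤ i < n, E_{i,n+i}·x(b) = (b_i+1) b_{n+i} x(b−ε_{n+i}+ε_i) and E_{n,2n}·x(b) = b_{2n} x(b−ε_{2n}+ε_n); for 1 ≤ i < n, E_{n+i,i}·x(b) = x(b+ε_{n+i}−ε_i) and E_{2n,n}·x(b) = b_n x(b+ε_{2n}−ε_n). -/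
open Finsupp

attribute [local instance] Classical.propDecidable

noncomputable section

/-- the set of admissible indices `b` for the module `N_{a₁,a₂}` over `sl_{2n}`
(`0`-indexed: entries `0,…,n−2` are negative integers congruent to `−1`, entry `n−1`
is in `a₁ + ℤ`, entry `n` is in `a₂ + ℤ`, entries `n+1,…,2n−1` are natural numbers,
and the coordinate sum equals `a₁ + a₂ − (n−1)`). -/
def adm (n : ℕ) (a1 a2 : ℂ) : Set (Fin (n + n) → ℂ) :=
  {b | (∀ i : Fin (n + n),
      ((i : ℕ) < n - 1 → ∃ k : ℤ, k < 0 ∧ b i = (k : ℂ)) ∧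
      ((i : ℕ) = n - 1 → ∃ k : ℤ, b i = a1 + (k : ℂ)) ∧
      ((i : ℕ) = n → ∃ k : ℤ, b i = a2 + (k : ℂ)) ∧
      (n < (i : ℕ) → ∃ k : ℕ, b i = (k : ℂ))) ∧
    ∑ i, b i = a1 + a2 - ((n : ℂ) - 1)}

/-- the `𝔥_θ`-weight of `x(b)`. -/
def wtTheta (n : ℕ) (b : Fin (n + n) → ℂ) : ℂ :=
  ∑ i : Fin (n + n), (if (i : ℕ) < n then b i else -b i)

/-- the `i`-th component of the `𝔥_n`-weight of `x(b)` (for `0 ≤ i`, `i + 1 < n`). -/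
def wtHn (n : ℕ) (b : Fin (n + n) → ℂ) (i : ℕ) (h : i + 1 < n) : ℂ :=
  (b ⟨i, by omega⟩ - b ⟨i + 1, by omega⟩) +
    (b ⟨n + i, by omega⟩ - b ⟨n + i + 1, by omega⟩)

/-- the raising operator `X_i = X_{α_i} + X_{α_{n+i}}` of `𝔟` (for `0 ≤ i`, `i + 1 < n`,
`0`-indexed). -/
def XopB (n : ℕ) (i : ℕ) (h : i + 1 < n) : Wsp (n + n) →ₗ[ℂ] Wsp (n + n) :=
  Eop (n + n) ⟨i, by omega⟩ ⟨i + 1, by omega⟩ +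
    Eop (n + n) ⟨n + i, by omega⟩ ⟨n + i + 1, by omega⟩

/-- the lowering operator `X_{−i} = X_{−α_i} + X_{−α_{n+i}}` of `𝔟` (for `0 ≤ i`,
`i + 1 < n`, `0`-indexed). -/
def XmB (n : ℕ) (i : ℕ) (h : i + 1 < n) : Wsp (n + n) →ₗ[ℂ] Wsp (n + n) :=
  Eop (n + n) ⟨i + 1, by omega⟩ ⟨i, by omega⟩ +
    Eop (n + n) ⟨n + i + 1, by omega⟩ ⟨n + i, by omega⟩

/-- the operator of `Y = Σ_{i=1}^n E_{i,n+i} ∈ 𝔞`. -/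
def Yop (n : ℕ) : Wsp (n + n) →ₗ[ℂ] Wsp (n + n) :=
  ∑ i : Fin n, Eop (n + n) (Fin.castAdd n i) (Fin.natAdd n i)

/-- the operator of `X = Σ_{i=1}^n E_{n+i,i} ∈ 𝔞`. -/
def Xop (n : ℕ) : Wsp (n + n) →ₗ[ℂ] Wsp (n + n) :=
  ∑ i : Fin n, Eop (n + n) (Fin.natAdd n i) (Fin.castAdd n i)

/-- the operator of `H = Σ_{i=1}^n (E_{i,i} − E_{n+i,n+i}) ∈ 𝔞`. -/
def Hop (n : ℕ) : Wsp (n + n) →ₗ[ℂ] Wsp (n + n) :=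
  ∑ i : Fin n,
    (Eop (n + n) (Fin.castAdd n i) (Fin.castAdd n i)
      - Eop (n + n) (Fin.natAdd n i) (Fin.natAdd n i))

/-- `|k| = k_1 + ⋯ + k_{n−1}` (with `k` `1`-indexed). -/
def ksum (n : ℕ) (k : ℕ → ℕ) : ℕ := ∑ j ∈ Finset.range (n - 1), k (j + 1)

/-- the partial sum `k_1 + ⋯ + k_j`. -/
def psum (k : ℕ → ℕ) (j : ℕ) : ℕ := ∑ t ∈ Finset.range j, k (t + 1)

/-- the coefficient `κ(k)` of proposition 5. -/
def kappa (n : ℕ) (a1 : ℂ) (b : ℤ) (c : ℕ) (k : ℕ → ℕ) : ℂ :=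
  (∏ j ∈ Finset.Icc 2 (n - 1), ((psum k j).choose (psum k (j - 1)) : ℂ)) *
    (∏ j ∈ Finset.range (ksum n k), ((c : ℂ) + 1 - ((j : ℂ) + 1))) /
    (((ksum n k).factorial : ℂ) *
      ∏ j ∈ Finset.range (ksum n k), (a1 + (b : ℂ) + ((j : ℂ) + 1)))

/-- the admissible index of the vector
`x_k(b,c) = x(−1−k_1,…,−1−k_{n−1}, a_1+b+|k|, a_2−b−c+k_1, k_2,…,k_{n−1}, c−|k|)`. -/
def xk (n : ℕ) (a1 a2 : ℂ) (b : ℤ) (c : ℕ) (k : ℕ → ℕ) : Fin (n + n) → ℂ :=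
  fun i =>
    if (i : ℕ) < n - 1 then -1 - (k ((i : ℕ) + 1) : ℂ)
    else if (i : ℕ) = n - 1 then a1 + (b : ℂ) + (ksum n k : ℂ)
    else if (i : ℕ) = n then a2 - (b : ℂ) - (c : ℂ) + (k 1 : ℂ)
    else if (i : ℕ) + 1 < n + n then (k ((i : ℕ) + 2 - n) : ℂ)
    else (c : ℂ) - (ksum n k : ℂ)

/-- turn a tuple `k : Fin (n−1) → Fin (c+1)` into a `1`-indexed sequence `ℕ → ℕ`. -/
def toK (n : ℕ) {c : ℕ} (k : Fin (n - 1) → Fin (c + 1)) : ℕ → ℕ :=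
  fun j => if h : 1 ≤ j ∧ j ≤ n - 1 then (k ⟨j - 1, by omega⟩ : ℕ) else 0

/-- the (finite) index set `{k ∈ ℕ^{n−1} : |k| ≤ c}`. -/
def Kset (n c : ℕ) : Finset (Fin (n - 1) → Fin (c + 1)) :=
  Finset.univ.filter fun k => ∑ i, (k i : ℕ) ≤ c

/-- the canonical `𝔟⁺`-highest weight vector `x(b,c) = Σ_{|k| ≤ c} κ(k) x_k(b,c)`. -/
def hwVec (n : ℕ) (a1 a2 : ℂ) (b : ℤ) (c : ℕ) : Wsp (n + n) :=
  ∑ k ∈ Kset n c, kappa n a1 b c (toK n k) • xv (n + n) (xk n a1 a2 b c (toK n k))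

end

lemma Eop_xv (m : ℕ) (i j : Fin m) (hij : i ≠ j) (b : Fin m → ℂ) :
    Eop m i j (xv m b) =
      ((if NegInt (b i) then b i + 1 else 1) * (if NegInt (b j) then 1 else b j)) •
        xv m (b - eps m j + eps m i) := by
  have h1 : (b - eps m j) i = b i := by
    simp [eps, hij]
  simp only [Eop, LinearMap.comp_apply, xv, pOp, qOp, Finsupp.lsum_single,
    LinearMap.smul_apply, Finsupp.lsingle_apply, map_smul, h1, smul_smul, mul_comm]

lemma not_negInt_add (a : ℂ) (ha : ∀ k : ℤ, a ≠ (k : ℂ)) (k : ℤ) : ¬ NegInt (a + (k : ℂ)) := by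
  rintro ⟨m, _, hm⟩
  apply ha (m - k)
  push_cast
  rw [eq_sub_iff_add_eq]
  exact hm

lemma not_negInt_nat (k : ℕ) : ¬ NegInt ((k : ℕ) : ℂ) := by
  rintro ⟨m, hm, he⟩
  have : (k : ℤ) = m := by exact_mod_cast he
  omega

/-- explicit action of the dual-pair root vectors `E_{i,n+i}` and
`E_{n+i,i}` on admissible basis vectors of `N_{a₁,a₂}` (`0`-indexed). -/
theorem dual_pair_action (n : ℕ) (hn : 1 < n) (a1 a2 : ℂ)
    (ha1 : ∀ k : ℤ, a1 ≠ (k : ℂ)) (ha2 : ∀ k : ℤ, a2 ≠ (k : ℂ))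
    (b : Fin (n + n) → ℂ) (hb : b ∈ adm n a1 a2) :
    (∀ i : Fin n, (i : ℕ) + 1 < n →
      Eop (n + n) (Fin.castAdd n i) (Fin.natAdd n i) (xv (n + n) b) =
        ((b (Fin.castAdd n i) + 1) * b (Fin.natAdd n i)) •
          xv (n + n) (b - eps (n + n) (Fin.natAdd n i) + eps (n + n) (Fin.castAdd n i))) ∧
    (∀ i : Fin n, (i : ℕ) = n - 1 →
      Eop (n + n) (Fin.castAdd n i) (Fin.natAdd n i) (xv (n + n) b) =
        b (Fin.natAdd n i) •
          xv (n + n) (b - eps (n + n) (Fin.natAdd n i) + eps (n + n) (Fin.castAdd n i))) ∧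
    (∀ i : Fin n, (i : ℕ) + 1 < n →
      Eop (n + n) (Fin.natAdd n i) (Fin.castAdd n i) (xv (n + n) b) =
        xv (n + n) (b + eps (n + n) (Fin.natAdd n i) - eps (n + n) (Fin.castAdd n i))) ∧
    (∀ i : Fin n, (i : ℕ) = n - 1 →
      Eop (n + n) (Fin.natAdd n i) (Fin.castAdd n i) (xv (n + n) b) =
        b (Fin.castAdd n i) •
          xv (n + n) (b + eps (n + n) (Fin.natAdd n i) - eps (n + n) (Fin.castAdd n i))) := by
  have hb1 := hb.1
  -- index inequality
  have hne : ∀ i : Fin n, Fin.castAdd n i ≠ Fin.natAdd n i := by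
    intro i
    have := i.isLt
    intro h
    rw [Fin.ext_iff] at h
    simp only [Fin.coe_castAdd, Fin.coe_natAdd] at h
    omega
  -- NegInt facts
  have hciA : ∀ i : Fin n, (i : ℕ) + 1 < n → NegInt (b (Fin.castAdd n i)) := by
    intro i hi
    exact (hb1 (Fin.castAdd n i)).1 (by simp; omega)
  have hniA : ∀ i : Fin n, (i : ℕ) + 1 < n → ¬ NegInt (b (Fin.natAdd n i)) := by
    intro i hi
    by_cases h0 : (i : ℕ) = 0
    · obtain ⟨k, hk⟩ := (hb1 (Fin.natAdd n i)).2.2.1 (by simp; omega)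
      rw [hk]; exact not_negInt_add a2 ha2 k
    · obtain ⟨k, hk⟩ := (hb1 (Fin.natAdd n i)).2.2.2 (by simp; omega)
      rw [hk]; exact not_negInt_nat k
  have hciB : ∀ i : Fin n, (i : ℕ) = n - 1 → ¬ NegInt (b (Fin.castAdd n i)) := by
    intro i hi
    obtain ⟨k, hk⟩ := (hb1 (Fin.castAdd n i)).2.1 (by simp [hi])
    rw [hk]; exact not_negInt_add a1 ha1 k
  have hniB : ∀ i : Fin n, (i : ℕ) = n - 1 → ¬ NegInt (b (Fin.natAdd n i)) := by
    intro i hi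
    obtain ⟨k, hk⟩ := (hb1 (Fin.natAdd n i)).2.2.2 (by simp; omega)
    rw [hk]; exact not_negInt_nat k
  have hswap : ∀ i : Fin n,
      b - eps (n + n) (Fin.castAdd n i) + eps (n + n) (Fin.natAdd n i) =
        b + eps (n + n) (Fin.natAdd n i) - eps (n + n) (Fin.castAdd n i) := by
    intro i
    funext t
    simp only [Pi.add_apply, Pi.sub_apply]
    ring
  refine ⟨?_, ?_, ?_, ?_⟩
  · intro i hi
    rw [Eop_xv _ _ _ (hne i) b, if_pos (hciA i hi), if_neg (hniA i hi)]
  · intro i hi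
    rw [Eop_xv _ _ _ (hne i) b, if_neg (hciB i hi), if_neg (hniB i hi), one_mul]
  · intro i hi
    rw [Eop_xv _ _ _ (hne i).symm b, if_neg (hniA i hi), if_pos (hciA i hi), one_mul,
      one_smul, hswap i]
  · intro i hi
    rw [Eop_xv _ _ _ (hne i).symm b, if_neg (hniB i hi), if_neg (hciB i hi), one_mul,
      hswap i]
end
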